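/- arXiv:1511.06462 — 5 statements merged into one kernel-verified Lean document; each statement's English description precedes it below -/
import Mathlib

section
/- Let l, r, K be positive integers with r ≤ l and r ≤ K. Let U be a real l×r matrix with rank U = r and Z a real r×K matrix with rank Z = r. Then the linear map Φ : ℝ^{l×r} × ℝ^{r×K} → ℝ^{l×K} defined by Φ(A, B) = A·Z + U·B (the Jacobian of the parametrization (U, Z) ↦ U·Z evaluated at (U, Z)) has rank (i.e., the dimension of its range) equal to l·r + K·r − r². -/
open Matrix

theorem aux_mulVecLin_eq_toLin' {m n : ℕ} (M : Matrix (Fin m) (Fin n) ℝ) :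
    M.mulVecLin = Matrix.toLin' M := rfl

/-- **Rank of the Jacobian of the bilinear parametrization `(U, Z) ↦ U·Z`.**
If `U ∈ ℝ^{l×r}` and `Z ∈ ℝ^{r×K}` both have full rank `r` (with `r ≤ l`, `r ≤ K`),
then the linear map `Φ(A, B) = A·Z + U·B` has rank `l·r + K·r − r²`. -/
theorem jacobian_rank (l r K : ℕ) (hl : 0 < l) (hr : 0 < r) (hK : 0 < K)
    (hrl : r ≤ l) (hrK : r ≤ K)
    (U : Matrix (Fin l) (Fin r) ℝ) (Z : Matrix (Fin r) (Fin K) ℝ)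
    (hU : U.rank = r) (hZ : Z.rank = r)
    (Φ : (Matrix (Fin l) (Fin r) ℝ × Matrix (Fin r) (Fin K) ℝ) →ₗ[ℝ]
      Matrix (Fin l) (Fin K) ℝ)
    (hΦ : ∀ A B, Φ (A, B) = A * Z + U * B) :
    Module.finrank ℝ (LinearMap.range Φ) = l * r + K * r - r ^ 2 := by
  classical
  have hU' : Module.finrank ℝ (LinearMap.range U.mulVecLin) = r := hU
  have hZ' : Module.finrank ℝ (LinearMap.range Z.mulVecLin) = r := hZ
  -- U is injective (as mulVecLin), get a matrix left inverse U₁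
  have hUker : LinearMap.ker U.mulVecLin = ⊥ := by
    have h := LinearMap.finrank_range_add_finrank_ker U.mulVecLin
    rw [hU', Module.finrank_pi, Fintype.card_fin] at h
    have h0 : Module.finrank ℝ (LinearMap.ker U.mulVecLin) = 0 := by omega
    exact Submodule.finrank_eq_zero.mp h0
  obtain ⟨g, hg⟩ := U.mulVecLin.exists_leftInverse_of_injective hUker
  set U₁ : Matrix (Fin r) (Fin l) ℝ := LinearMap.toMatrix' g with hU₁def
  have hU₁U : U₁ * U = 1 := by
    have : Matrix.toLin' (U₁ * U) = Matrix.toLin' (1 : Matrix (Fin r) (Fin r) ℝ) := by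
      rw [Matrix.toLin'_mul, Matrix.toLin'_one, hU₁def, Matrix.toLin'_toMatrix',
        ← aux_mulVecLin_eq_toLin']
      exact hg
    exact Matrix.toLin'.injective this
  -- Z is surjective, get a matrix right inverse Z₁
  have hZtop : LinearMap.range Z.mulVecLin = ⊤ := by
    apply Submodule.eq_top_of_finrank_eq
    rw [hZ', Module.finrank_pi, Fintype.card_fin]
  obtain ⟨s, hs⟩ := Z.mulVecLin.exists_rightInverse_of_surjective hZtop
  set Z₁ : Matrix (Fin K) (Fin r) ℝ := LinearMap.toMatrix' s with hZ₁def
  have hZZ₁ : Z * Z₁ = 1 := by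
    have : Matrix.toLin' (Z * Z₁) = Matrix.toLin' (1 : Matrix (Fin r) (Fin r) ℝ) := by
      rw [Matrix.toLin'_mul, Matrix.toLin'_one, hZ₁def, Matrix.toLin'_toMatrix',
        ← aux_mulVecLin_eq_toLin']
      exact hs
    exact Matrix.toLin'.injective this
  -- the map ι : C ↦ (U*C, -(C*Z)) parametrizes the kernel of Φ
  let ι : Matrix (Fin r) (Fin r) ℝ →ₗ[ℝ]
      (Matrix (Fin l) (Fin r) ℝ × Matrix (Fin r) (Fin K) ℝ) :=
    { toFun := fun C => (U * C, -(C * Z))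
      map_add' := by intro C D; simp [Matrix.mul_add, Matrix.add_mul]; abel
      map_smul' := by intro c C; simp [Matrix.mul_smul, Matrix.smul_mul] }
  have hι : ∀ C, ι C = (U * C, -(C * Z)) := fun C => rfl
  have hιinj : Function.Injective ι := by
    rw [← LinearMap.ker_eq_bot]
    ext C
    simp only [LinearMap.mem_ker, Submodule.mem_bot]
    constructor
    · intro h
      have h1 : U * C = 0 := congrArg Prod.fst h
      calc C = (U₁ * U) * C := by rw [hU₁U, Matrix.one_mul]
        _ = U₁ * (U * C) := by rw [Matrix.mul_assoc]
        _ = 0 := by rw [h1, Matrix.mul_zero]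
    · rintro rfl
      simp [hι]
  have hker : LinearMap.ker Φ = LinearMap.range ι := by
    ext ⟨A, B⟩
    simp only [LinearMap.mem_ker, LinearMap.mem_range, hΦ]
    constructor
    · intro h
      refine ⟨-(B * Z₁), ?_⟩
      have hA : U * -(B * Z₁) = A := by
        have h2 := congrArg (· * Z₁) h
        simp only [Matrix.add_mul, Matrix.zero_mul] at h2
        have h3 : A * Z * Z₁ + U * B * Z₁ = 0 := h2
        rw [Matrix.mul_assoc A Z Z₁, hZZ₁, Matrix.mul_one] at h3
        rw [Matrix.mul_neg, Matrix.mul_assoc] at *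
        linear_combination (norm := abel) -h3
      have hB : -(-(B * Z₁) * Z) = B := by
        have h4 : U * (B * Z₁ * Z) = U * B := by
          have h5 : U * B = -(A * Z) := by
            rw [eq_neg_iff_add_eq_zero]
            rw [add_comm]; exact h
          rw [h5, ← hA]
          simp [Matrix.mul_assoc]
        have h6 : B * Z₁ * Z = B := by
          calc B * Z₁ * Z = (U₁ * U) * (B * Z₁ * Z) := by rw [hU₁U, Matrix.one_mul]
            _ = U₁ * (U * (B * Z₁ * Z)) := by rw [Matrix.mul_assoc]
            _ = U₁ * (U * B) := by rw [h4]
            _ = (U₁ * U) * B := by rw [Matrix.mul_assoc]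
            _ = B := by rw [hU₁U, Matrix.one_mul]
        rw [Matrix.neg_mul, neg_neg, h6]
      rw [hι]
      exact Prod.ext hA hB
    · rintro ⟨C, hC⟩
      rw [hι] at hC
      have hA : A = U * C := (congrArg Prod.fst hC).symm
      have hB : B = -(C * Z) := (congrArg Prod.snd hC).symm
      rw [hA, hB, Matrix.mul_neg, Matrix.mul_assoc, add_neg_cancel]
  -- rank-nullity
  have hrn := LinearMap.finrank_range_add_finrank_ker Φ
  have hkerdim : Module.finrank ℝ (LinearMap.ker Φ) = r * r := by
    rw [hker, LinearMap.finrank_range_of_inj hιinj, Module.finrank_matrix,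
      Fintype.card_fin, Module.finrank_self, mul_one]
  have hdom : Module.finrank ℝ
      (Matrix (Fin l) (Fin r) ℝ × Matrix (Fin r) (Fin K) ℝ) = l * r + r * K := by
    simp [Module.finrank_prod, Module.finrank_matrix]
  rw [hkerdim, hdom] at hrn
  have : l * r + K * r - r ^ 2 = l * r + r * K - r * r := by
    rw [pow_two, Nat.mul_comm K r]
  rw [this]
  exact Nat.eq_sub_of_add_eq hrn
end

section
/- Let Y be a real m×n matrix of rank r with a full singular value decomposition Y = U Σ Vᵀ, where U ∈ ℝ^{m×m} and V ∈ ℝ^{n×n} are orthogonal and Σ ∈ ℝ^{m×n} has the r nonzero singular values of Y in its first r diagonal positions and zeros elsewhere. Let ΔY be any real m×n matrix and set Γ = Uᵀ ΔY V, written in blocks Γ = [[Γ₁₁, Γ₁₂], [Γ₂₁, Γ₂₂]] with Γ₁₁ of size r×r. Define ΔY″ = U [[0, 0], [0, Γ₂₂]] Vᵀ and ΔY′ = ΔY − ΔY″. Then ‖Y‖_* − ‖Y + ΔY‖_* ≤ ‖ΔY′‖_* − ‖ΔY″‖_*. -/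
open Matrix

open scoped MatrixOrder in
/-- Nuclear norm: trace of the psd square root of `Aᵀ * A`. -/
noncomputable def nuclearNorm {m n : Type*} [Fintype m] [Fintype n] [DecidableEq n]
    (A : Matrix m n ℝ) : ℝ :=
  (CFC.sqrt (Aᴴ * A)).trace

/-!
Conjugating by the orthogonal factors of the SVD gives `‖Y‖_* = ‖Σ‖_*` and `‖ΔY″‖_* = ‖Γ₂₂‖_*`
(with `Γ₂₂` padded by zeros), and `Σ` and the padded `Γ₂₂` have disjoint row and column supports.
For such `A`, `C` one has `(A + C)ᴴ (A + C) = AᴴA + CᴴC` with `AᴴA · CᴴC = 0`, so the psd square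
roots add and `‖Y + ΔY″‖_* = ‖Y‖_* + ‖ΔY″‖_*`. The triangle inequality for
`Y + ΔY″ = (Y + ΔY) - ΔY′` then gives the claim. The triangle inequality itself follows from the
duality `‖A‖_* = max {tr (Aᴴ B) | Bᴴ B ≤ 1}`, which is checked in an eigenbasis of `AᴴA`.
-/

open scoped MatrixOrder

section CFCSqrt

variable {n : Type*} [Fintype n] [DecidableEq n]

lemma cfcSqrt_mul_eq_zero {m : Type*} {M : Matrix n n ℝ} {X : Matrix n m ℝ} (hM : 0 ≤ M)
    (h : M * X = 0) : CFC.sqrt M * X = 0 := by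
  have hS : (CFC.sqrt M)ᴴ = CFC.sqrt M := (CFC.sqrt_nonneg M).posSemidef.isHermitian
  rwa [← conjTranspose_mul_self_mul_eq_zero, hS, CFC.sqrt_mul_sqrt_self M hM]

lemma cfcSqrt_mul_cfcSqrt_eq_zero {P Q : Matrix n n ℝ} (hP : 0 ≤ P) (hQ : 0 ≤ Q)
    (h : P * Q = 0) : CFC.sqrt Q * CFC.sqrt P = 0 := by
  refine cfcSqrt_mul_eq_zero hQ ?_
  simpa [star_mul, (IsSelfAdjoint.of_nonneg hQ).star_eq,
    (IsSelfAdjoint.of_nonneg (CFC.sqrt_nonneg P)).star_eq] using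
    congrArg star (cfcSqrt_mul_eq_zero hP h)

lemma cfcSqrt_add_of_mul_eq_zero {P Q : Matrix n n ℝ} (hP : 0 ≤ P) (hQ : 0 ≤ Q)
    (h : P * Q = 0) : CFC.sqrt (P + Q) = CFC.sqrt P + CFC.sqrt Q := by
  have h' : Q * P = 0 := by
    simpa [star_mul, (IsSelfAdjoint.of_nonneg hP).star_eq,
      (IsSelfAdjoint.of_nonneg hQ).star_eq] using congrArg star h
  refine CFC.sqrt_unique ?_ (add_nonneg (CFC.sqrt_nonneg P) (CFC.sqrt_nonneg Q))
  rw [add_mul, mul_add, mul_add, CFC.sqrt_mul_sqrt_self P hP, CFC.sqrt_mul_sqrt_self Q hQ,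
    cfcSqrt_mul_cfcSqrt_eq_zero hP hQ h, cfcSqrt_mul_cfcSqrt_eq_zero hQ hP h', add_zero, zero_add]

lemma cfcSqrt_conjTranspose_mul_mul {m : Type*} [Fintype m] [DecidableEq m] {M : Matrix n n ℝ}
    (hM : 0 ≤ M) {W : Matrix n m ℝ} (hW : W * Wᴴ = 1) :
    CFC.sqrt (Wᴴ * M * W) = Wᴴ * CFC.sqrt M * W := by
  refine CFC.sqrt_unique ?_ ((CFC.sqrt_nonneg M).posSemidef.conjTranspose_mul_mul_same W).nonneg
  calc Wᴴ * CFC.sqrt M * W * (Wᴴ * CFC.sqrt M * W)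
      = Wᴴ * CFC.sqrt M * (W * Wᴴ) * CFC.sqrt M * W := by simp only [Matrix.mul_assoc]
    _ = Wᴴ * M * W := by
      rw [hW, Matrix.mul_one, Matrix.mul_assoc Wᴴ, CFC.sqrt_mul_sqrt_self M hM]

lemma cfcSqrt_diagonal {d : n → ℝ} (hd : 0 ≤ d) :
    CFC.sqrt (diagonal d) = diagonal fun i => √(d i) := by
  refine CFC.sqrt_unique ?_ (posSemidef_diagonal_iff.mpr fun i => Real.sqrt_nonneg _).nonneg
  rw [diagonal_mul_diagonal]
  exact congrArg diagonal (funext fun i => Real.mul_self_sqrt (hd i))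

end CFCSqrt

section NuclearNorm

variable {l m n : Type*} [Fintype l] [Fintype m] [Fintype n] [DecidableEq n]

lemma nuclearNorm_congr {A : Matrix m n ℝ} {B : Matrix l n ℝ} (h : Aᴴ * A = Bᴴ * B) :
    nuclearNorm A = nuclearNorm B := by
  rw [nuclearNorm, nuclearNorm, h]

lemma nuclearNorm_neg (A : Matrix m n ℝ) : nuclearNorm (-A) = nuclearNorm A :=
  nuclearNorm_congr (by simp)

lemma nuclearNorm_isometry_mul [DecidableEq m] {U : Matrix l m ℝ} (hU : Uᴴ * U = 1)
    (A : Matrix m n ℝ) : nuclearNorm (U * A) = nuclearNorm A :=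
  nuclearNorm_congr (by rw [conjTranspose_mul, Matrix.mul_assoc, ← Matrix.mul_assoc Uᴴ, hU,
    Matrix.one_mul])

lemma nuclearNorm_mul_coisometry [DecidableEq l] {W : Matrix n l ℝ} (hW : W * Wᴴ = 1)
    (A : Matrix m n ℝ) : nuclearNorm (A * W) = nuclearNorm A := by
  have hgram : (A * W)ᴴ * (A * W) = Wᴴ * (Aᴴ * A) * W := by
    simp only [conjTranspose_mul, Matrix.mul_assoc]
  rw [nuclearNorm, hgram, cfcSqrt_conjTranspose_mul_mul
    (posSemidef_conjTranspose_mul_self A).nonneg hW, trace_mul_cycle, hW, Matrix.one_mul,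
    nuclearNorm]

lemma nuclearNorm_eq_sum_sqrt_of_gram_eq_diagonal {A : Matrix m n ℝ} {d : n → ℝ}
    (hd : 0 ≤ d) (h : Aᴴ * A = diagonal d) : nuclearNorm A = ∑ j, √(d j) := by
  rw [nuclearNorm, h, cfcSqrt_diagonal hd, trace_diagonal]

lemma exists_unitary_gram_eq_diagonal (A : Matrix m n ℝ) :
    ∃ W : Matrix n n ℝ, Wᴴ * W = 1 ∧ W * Wᴴ = 1 ∧
      ∃ d : n → ℝ, 0 ≤ d ∧ (A * W)ᴴ * (A * W) = diagonal d := by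
  set hH := isHermitian_conjTranspose_mul_self A
  refine ⟨hH.eigenvectorUnitary, Unitary.coe_star_mul_self hH.eigenvectorUnitary,
    Unitary.coe_mul_star_self hH.eigenvectorUnitary,
    hH.eigenvalues, eigenvalues_conjTranspose_mul_self_nonneg A, ?_⟩
  have := hH.conjStarAlgAut_star_eigenvectorUnitary
  rw [Unitary.conjStarAlgAut_star_apply] at this
  simpa [star_eq_conjTranspose, conjTranspose_mul, Matrix.mul_assoc] using this

end NuclearNorm

lemma conjTranspose_mul_apply_self_le {m n : Type*} [Fintype m] (P Q : Matrix m n ℝ) (j : n) :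
    (Pᴴ * Q) j j ≤ √((Pᴴ * P) j j) * √((Qᴴ * Q) j j) := by
  simpa [mul_apply, sq] using
    Real.sum_mul_le_sqrt_mul_sqrt Finset.univ (fun i => P i j) (fun i => Q i j)

lemma diag_le_diag_of_le {n : Type*} [Fintype n] {X Y : Matrix n n ℝ} (h : X ≤ Y) (j : n) :
    X j j ≤ Y j j := by
  simpa using (le_iff.mp h).diag_nonneg (i := j)

lemma conjTranspose_mul_self_mul_le_one {m n p : Type*} [Fintype m] [Fintype n] [Fintype p]
    [DecidableEq n] [DecidableEq p] {B : Matrix m n ℝ} (hB : Bᴴ * B ≤ 1) {W : Matrix n p ℝ}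
    (hW : Wᴴ * W = 1) : (B * W)ᴴ * (B * W) ≤ 1 := by
  have := (le_iff.mp hB).conjTranspose_mul_mul_same W
  rw [Matrix.mul_sub, Matrix.sub_mul, Matrix.mul_one, hW] at this
  rw [le_iff, conjTranspose_mul, Matrix.mul_assoc, ← Matrix.mul_assoc Bᴴ]
  simpa only [Matrix.mul_assoc] using this

section Duality

variable {m n : Type*} [Fintype m] [Fintype n] [DecidableEq n]

lemma trace_conjTranspose_mul_le_nuclearNorm (A B : Matrix m n ℝ) (hB : Bᴴ * B ≤ 1) :
    (Aᴴ * B).trace ≤ nuclearNorm A := by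
  obtain ⟨W, hW, hW', d, hd, hgram⟩ := exists_unitary_gram_eq_diagonal A
  have hBW := conjTranspose_mul_self_mul_le_one hB hW
  calc (Aᴴ * B).trace = ((A * W)ᴴ * (B * W)).trace := by
        rw [conjTranspose_mul, Matrix.mul_assoc, trace_mul_comm Wᴴ, Matrix.mul_assoc,
          Matrix.mul_assoc, hW', Matrix.mul_one]
    _ ≤ ∑ j, √(((A * W)ᴴ * (A * W)) j j) * √(((B * W)ᴴ * (B * W)) j j) :=
        Finset.sum_le_sum fun j _ => conjTranspose_mul_apply_self_le _ _ j
    _ ≤ ∑ j, √(d j) := by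
        refine Finset.sum_le_sum fun j _ => ?_
        rw [hgram, diagonal_apply_eq]
        exact mul_le_of_le_one_right (Real.sqrt_nonneg _)
          (Real.sqrt_le_one.mpr (by simpa using diag_le_diag_of_le hBW j))
    _ = nuclearNorm A := by
        rw [← nuclearNorm_eq_sum_sqrt_of_gram_eq_diagonal hd hgram,
          nuclearNorm_mul_coisometry hW']

lemma exists_trace_conjTranspose_mul_eq_nuclearNorm (A : Matrix m n ℝ) :
    ∃ B : Matrix m n ℝ, Bᴴ * B ≤ 1 ∧ (Aᴴ * B).trace = nuclearNorm A := by
  obtain ⟨W, hW, hW', d, hd, hgram⟩ := exists_unitary_gram_eq_diagonal A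
  -- `B` is the partial isometry of the polar decomposition; `0⁻¹ = 0` handles the kernel.
  set D := diagonal fun j => (√(d j))⁻¹
  have hD : (A * W * D)ᴴ * (A * W * D) =
      diagonal fun j => (√(d j))⁻¹ * d j * (√(d j))⁻¹ := by
    rw [conjTranspose_mul, diagonal_conjTranspose, Matrix.mul_assoc,
      ← Matrix.mul_assoc _ (A * W), hgram, diagonal_mul_diagonal, diagonal_mul_diagonal]
    simp [mul_assoc]
  refine ⟨A * W * D * Wᴴ,
    conjTranspose_mul_self_mul_le_one ?_ (by rwa [conjTranspose_conjTranspose]), ?_⟩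
  · rw [hD, le_iff, ← diagonal_one, diagonal_sub, posSemidef_diagonal_iff]
    intro j
    rw [sub_nonneg, mul_right_comm, ← mul_inv, Real.mul_self_sqrt (hd j)]
    exact inv_mul_le_one (a := d j)
  · calc (Aᴴ * (A * W * D * Wᴴ)).trace = ((A * W)ᴴ * (A * W) * D).trace := by
          rw [show Aᴴ * (A * W * D * Wᴴ) = Aᴴ * A * W * D * Wᴴ by simp only [Matrix.mul_assoc],
            trace_mul_comm]
          simp only [conjTranspose_mul, Matrix.mul_assoc]
      _ = ∑ j, √(d j) := by
          rw [hgram, diagonal_mul_diagonal, trace_diagonal]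
          exact Finset.sum_congr rfl fun j _ => Real.div_sqrt
      _ = nuclearNorm A := by
          rw [← nuclearNorm_eq_sum_sqrt_of_gram_eq_diagonal hd hgram,
            nuclearNorm_mul_coisometry hW']

lemma nuclearNorm_add_le (A C : Matrix m n ℝ) :
    nuclearNorm (A + C) ≤ nuclearNorm A + nuclearNorm C := by
  obtain ⟨B, hB, hdual⟩ := exists_trace_conjTranspose_mul_eq_nuclearNorm (A + C)
  rw [← hdual, conjTranspose_add, Matrix.add_mul, trace_add]
  exact add_le_add (trace_conjTranspose_mul_le_nuclearNorm A B hB)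
    (trace_conjTranspose_mul_le_nuclearNorm C B hB)

lemma nuclearNorm_sub_le (A C : Matrix m n ℝ) :
    nuclearNorm (A - C) ≤ nuclearNorm A + nuclearNorm C := by
  simpa only [sub_eq_add_neg, nuclearNorm_neg] using nuclearNorm_add_le A (-C)

end Duality

section Additivity

variable {m n : Type*} [Fintype m] [Fintype n] [DecidableEq n]

lemma nuclearNorm_add_of_orthogonal {A C : Matrix m n ℝ} (hAC : Aᴴ * C = 0)
    (hAC' : A * Cᴴ = 0) : nuclearNorm (A + C) = nuclearNorm A + nuclearNorm C := by
  have hCA : Cᴴ * A = 0 := by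
    rw [← conjTranspose_conjTranspose A, ← conjTranspose_mul, hAC, conjTranspose_zero]
  have hgram : (A + C)ᴴ * (A + C) = Aᴴ * A + Cᴴ * C := by
    rw [conjTranspose_add, Matrix.add_mul, Matrix.mul_add, Matrix.mul_add, hAC, hCA, add_zero,
      zero_add]
  have hprod : Aᴴ * A * (Cᴴ * C) = 0 := by
    rw [Matrix.mul_assoc, ← Matrix.mul_assoc A, hAC', Matrix.zero_mul, Matrix.mul_zero]
  rw [nuclearNorm, hgram, cfcSqrt_add_of_mul_eq_zero (posSemidef_conjTranspose_mul_self A).nonneg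
    (posSemidef_conjTranspose_mul_self C).nonneg hprod, trace_add, nuclearNorm, nuclearNorm]

end Additivity

lemma conjTranspose_mul_eq_zero_of_disjoint_rows {m n p : Type*} [Fintype m]
    {A : Matrix m n ℝ} {C : Matrix m p ℝ} (s : m → Prop) (hA : ∀ i j, ¬ s i → A i j = 0)
    (hC : ∀ i j, s i → C i j = 0) : Aᴴ * C = 0 := by
  ext j k
  rw [mul_apply, Matrix.zero_apply]
  refine Finset.sum_eq_zero fun i _ => ?_
  by_cases hi : s i
  · rw [hC i k hi, mul_zero]
  · rw [conjTranspose_apply, hA i j hi, star_zero, zero_mul]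

lemma mul_conjTranspose_eq_zero_of_disjoint_cols {m n p : Type*} [Fintype n]
    {A : Matrix m n ℝ} {C : Matrix p n ℝ} (s : n → Prop) (hA : ∀ i j, ¬ s j → A i j = 0)
    (hC : ∀ i j, s j → C i j = 0) : A * Cᴴ = 0 := by
  simpa using conjTranspose_mul_eq_zero_of_disjoint_rows (A := Aᴴ) (C := Cᴴ) s
    (fun j i hj => by simp [hA i j hj]) (fun j i hj => by simp [hC i j hj])

theorem nuclear_norm_decomposition_general (m n r : ℕ)
    (Y ΔY : Matrix (Fin m) (Fin n) ℝ)
    (U : Matrix (Fin m) (Fin m) ℝ) (V : Matrix (Fin n) (Fin n) ℝ)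
    (Sig : Matrix (Fin m) (Fin n) ℝ)
    (hU : Uᵀ * U = 1)
    (hV : Vᵀ * V = 1)
    (hSVD : Y = U * Sig * Vᵀ)
    (hoff : ∀ (i : Fin m) (j : Fin n), (i : ℕ) ≠ (j : ℕ) → Sig i j = 0)
    (htail : ∀ (i : Fin m) (j : Fin n), (i : ℕ) = (j : ℕ) → r ≤ (i : ℕ) → Sig i j = 0)
    (ΔY'' ΔY' : Matrix (Fin m) (Fin n) ℝ)
    (hΔY'' : ΔY'' = U * (Matrix.of fun (i : Fin m) (j : Fin n) =>
      if r ≤ (i : ℕ) ∧ r ≤ (j : ℕ) then (Uᵀ * ΔY * V) i j else 0) * Vᵀ)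
    (hΔY' : ΔY' = ΔY - ΔY'') :
    nuclearNorm Y - nuclearNorm (Y + ΔY) ≤ nuclearNorm ΔY' - nuclearNorm ΔY'' := by
  set G : Matrix (Fin m) (Fin n) ℝ := Matrix.of fun i j =>
    if r ≤ (i : ℕ) ∧ r ≤ (j : ℕ) then (Uᵀ * ΔY * V) i j else 0
  have hUV (X : Matrix (Fin m) (Fin n) ℝ) : nuclearNorm (U * X * Vᵀ) = nuclearNorm X := by
    rw [← conjTranspose_eq_transpose_of_trivial] at hU
    rw [nuclearNorm_mul_coisometry (by simpa using hV), nuclearNorm_isometry_mul hU]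
  have hSig_row (i : Fin m) (j : Fin n) (hi : ¬ (i : ℕ) < r) : Sig i j = 0 := by
    by_cases hij : (i : ℕ) = j
    · exact htail i j hij (not_lt.mp hi)
    · exact hoff i j hij
  have hSig_col (i : Fin m) (j : Fin n) (hj : ¬ (j : ℕ) < r) : Sig i j = 0 := by
    by_cases hij : (i : ℕ) = j
    · exact htail i j hij (by omega)
    · exact hoff i j hij
  have hG_row (i : Fin m) (j : Fin n) (hi : (i : ℕ) < r) : G i j = 0 := if_neg (by omega)
  have hG_col (i : Fin m) (j : Fin n) (hj : (j : ℕ) < r) : G i j = 0 := if_neg (by omega)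
  have hsplit : nuclearNorm (Sig + G) = nuclearNorm Sig + nuclearNorm G :=
    nuclearNorm_add_of_orthogonal
      (conjTranspose_mul_eq_zero_of_disjoint_rows _ hSig_row hG_row)
      (mul_conjTranspose_eq_zero_of_disjoint_cols _ hSig_col hG_col)
  have htri := nuclearNorm_sub_le (Y + ΔY) ΔY'
  rw [show Y + ΔY - ΔY' = U * (Sig + G) * Vᵀ by
    rw [hΔY', hSVD, hΔY'', Matrix.mul_add, Matrix.add_mul]; abel, hUV, hsplit] at htri
  have hnormY : nuclearNorm Y = nuclearNorm Sig := hSVD ▸ hUV Sig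
  have hnormΔY'' : nuclearNorm ΔY'' = nuclearNorm G := hΔY'' ▸ hUV G
  linarith

/-- **Nuclear norm decomposition inequality** (Lemma 2 of the paper).
Given a full SVD `Y = U Σ Vᵀ` of a rank-`r` matrix, with `Σ` supported on its
first `r` diagonal entries (which are nonzero), and any perturbation `ΔY`, letting
`Γ = Uᵀ ΔY V`, `ΔY″ = U [[0,0],[0,Γ₂₂]] Vᵀ` and `ΔY′ = ΔY − ΔY″`, one has
`‖Y‖_* − ‖Y + ΔY‖_* ≤ ‖ΔY′‖_* − ‖ΔY″‖_*`. -/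
theorem nuclear_norm_decomposition (m n r : ℕ)
    (Y ΔY : Matrix (Fin m) (Fin n) ℝ)
    (U : Matrix (Fin m) (Fin m) ℝ) (V : Matrix (Fin n) (Fin n) ℝ)
    (Sig : Matrix (Fin m) (Fin n) ℝ)
    (hU : Uᵀ * U = 1) (hU' : U * Uᵀ = 1)
    (hV : Vᵀ * V = 1) (hV' : V * Vᵀ = 1)
    (hSVD : Y = U * Sig * Vᵀ)
    (hrank : Y.rank = r)
    (hoff : ∀ (i : Fin m) (j : Fin n), (i : ℕ) ≠ (j : ℕ) → Sig i j = 0)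
    (htail : ∀ (i : Fin m) (j : Fin n), (i : ℕ) = (j : ℕ) → r ≤ (i : ℕ) → Sig i j = 0)
    (hpos : ∀ (i : Fin m) (j : Fin n), (i : ℕ) = (j : ℕ) → (i : ℕ) < r → Sig i j ≠ 0)
    (ΔY'' ΔY' : Matrix (Fin m) (Fin n) ℝ)
    (hΔY'' : ΔY'' = U * (Matrix.of fun (i : Fin m) (j : Fin n) =>
      if r ≤ (i : ℕ) ∧ r ≤ (j : ℕ) then (Uᵀ * ΔY * V) i j else 0) * Vᵀ)
    (hΔY' : ΔY' = ΔY - ΔY'') :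
    nuclearNorm Y - nuclearNorm (Y + ΔY) ≤ nuclearNorm ΔY' - nuclearNorm ΔY'' :=
  nuclear_norm_decomposition_general m n r Y ΔY U V Sig hU hV hSVD hoff htail ΔY'' ΔY' hΔY'' hΔY'
end

section
/- Let B be a real symmetric positive semidefinite p×p matrix with smallest eigenvalue λ_p(B) = μ, and let Δ be a real symmetric p×p matrix. Then tr( (B Δ)² ) ≥ μ² · ‖Δ‖_F². -/
open Matrix

noncomputable def frobNorm {m n : Type*} [Fintype m] [Fintype n]
    (A : Matrix m n ℝ) : ℝ :=
  Real.sqrt (∑ i, ∑ j, (A i j) ^ 2)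

/-- **Lower bound on the quadratic form `tr((BΔ)²)`**: if `B ⪰ 0` has smallest
eigenvalue `μ` and `Δ` is symmetric, then `tr((BΔ)²) ≥ μ² ‖Δ‖_F²`. -/
theorem trace_sq_ge_smallest_eigenvalue_sq_mul_frobNorm_sq (p : ℕ)
    (B Δ : Matrix (Fin p) (Fin p) ℝ)
    (hB : B.PosSemidef) (hΔ : Δ.IsHermitian)
    (μ : ℝ) (hμ : IsLeast {t : ℝ | ∃ i, hB.1.eigenvalues i = t} μ) :
    μ ^ 2 * frobNorm Δ ^ 2 ≤ ((B * Δ) ^ 2).trace := by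
  set d := hB.1.eigenvalues with hd
  set U : Matrix (Fin p) (Fin p) ℝ := (hB.1.eigenvectorUnitary : Matrix (Fin p) (Fin p) ℝ) with hUdef
  have hU1 : U * star U = 1 := (Matrix.mem_unitaryGroup_iff).mp hB.1.eigenvectorUnitary.2
  set E : Matrix (Fin p) (Fin p) ℝ := star U * Δ * U with hE
  have hstarE : Eᴴ = E := by
    rw [hE, Matrix.star_eq_conjTranspose]
    simp only [conjTranspose_mul, conjTranspose_conjTranspose, hΔ.eq, mul_assoc]
  have hEsymm : ∀ i j, E j i = E i j := by
    intro i j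
    conv_lhs => rw [← hstarE]
    simp [conjTranspose_apply]
  have hΔsymm : ∀ i j, Δ j i = Δ i j := by
    intro i j
    conv_lhs => rw [← hΔ.eq]
    simp [conjTranspose_apply]
  have hspec : B = U * diagonal d * star U := by
    simpa using hB.1.spectral_theorem
  have htr : ((B * Δ) ^ 2).trace = ∑ i, ∑ j, d i * d j * (E i j)^2 := by
    have h1 : (B * Δ) ^ 2 = U * (diagonal d * E * diagonal d * (star U * Δ)) := by
      rw [hspec, hE]
      simp only [pow_two, mul_assoc]
    rw [h1, Matrix.trace_mul_comm]
    have h2 : diagonal d * E * diagonal d * (star U * Δ) * U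
        = diagonal d * E * diagonal d * E := by
      rw [hE]; simp only [mul_assoc]
    rw [h2, Matrix.trace]
    simp only [Matrix.diag_apply, Matrix.mul_apply, Matrix.diagonal_apply, ite_mul, mul_ite,
      zero_mul, mul_zero, Finset.sum_ite_eq, Finset.sum_ite_eq', Finset.mem_univ, if_true]
    refine Finset.sum_congr rfl fun i _ => Finset.sum_congr rfl fun j _ => ?_
    rw [hEsymm i j]; ring
  have hfrob : ∑ i, ∑ j, (E i j)^2 = ∑ i, ∑ j, (Δ i j)^2 := by
    have h3 : (E * E).trace = (Δ * Δ).trace := by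
      have h4 : E * E = star U * (Δ * Δ) * U := by
        rw [hE]
        simp only [mul_assoc]
        rw [← mul_assoc U (star U) (Δ * U), hU1, one_mul]
      rw [h4, Matrix.trace_mul_comm (star U * (Δ * Δ)) U, ← mul_assoc,
        ← mul_assoc, hU1, one_mul]
    have h5 : (E * E).trace = ∑ i, ∑ j, (E i j)^2 := by
      rw [Matrix.trace]
      simp only [Matrix.diag_apply, Matrix.mul_apply]
      exact Finset.sum_congr rfl fun i _ => Finset.sum_congr rfl fun j _ => by
        rw [hEsymm i j]; ring
    have h6 : (Δ * Δ).trace = ∑ i, ∑ j, (Δ i j)^2 := by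
      rw [Matrix.trace]
      simp only [Matrix.diag_apply, Matrix.mul_apply]
      exact Finset.sum_congr rfl fun i _ => Finset.sum_congr rfl fun j _ => by
        rw [hΔsymm i j]; ring
    rw [← h5, ← h6, h3]
  have hμ0 : 0 ≤ μ := by
    obtain ⟨i, hi⟩ := hμ.1
    exact hi ▸ hB.eigenvalues_nonneg i
  have hdi : ∀ i, μ ≤ d i := fun i => hμ.2 ⟨i, rfl⟩
  have hsum : frobNorm Δ ^ 2 = ∑ i, ∑ j, (Δ i j)^2 := by
    rw [frobNorm, Real.sq_sqrt]
    positivity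
  rw [htr, hsum, ← hfrob, Finset.mul_sum]
  refine Finset.sum_le_sum fun i _ => ?_
  rw [Finset.mul_sum]
  refine Finset.sum_le_sum fun j _ => ?_
  have hle : μ ^ 2 ≤ d i * d j := by nlinarith [hdi i, hdi j]
  exact mul_le_mul_of_nonneg_right hle (sq_nonneg _)
end

section
/- Let J be a real m×q matrix, c > 0, and let M be a real symmetric positive definite m×m matrix with M ⪯ c·I (i.e., c·I − M is positive semidefinite). Then tr( (Jᵀ M J)† · (Jᵀ J) ) ≥ (1/c) · rank J, where (Jᵀ M J)† denotes the Moore–Penrose pseudoinverse of Jᵀ M J. -/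
/-!
The pseudoinverse `P` of the positive semidefinite matrix `A = Jᵀ M J` is itself positive
semidefinite, and `M ⪯ c I` gives `A ⪯ c JᵀJ`, so `tr (P A) ≤ c · tr (P JᵀJ)`. The matrix `P A`
is idempotent, hence its trace is its rank, which equals `rank A`; and `rank A = rank J` because
`M` is positive definite.
-/

open Matrix

/-- `P` is the Moore–Penrose pseudoinverse of `A`, characterized by the four
Penrose conditions. -/
def IsMoorePenroseInv {q : Type*} [Fintype q]
    (A P : Matrix q q ℝ) : Prop :=
  A * P * A = A ∧ P * A * P = P ∧ (A * P)ᵀ = A * P ∧ (P * A)ᵀ = P * A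

namespace Matrix

theorem trace_eq_rank_of_isIdempotentElem {K n : Type*} [Field K] [Fintype n] [DecidableEq n]
    {E : Matrix n n K} (hE : IsIdempotentElem E) : E.trace = E.rank := by
  have h : IsIdempotentElem (toLin' E) := hE.map toLinAlgEquiv'
  rw [← trace_toLin'_eq, (LinearMap.IsIdempotentElem.isProj_range _ h).trace]
  rfl

theorem PosDef.ker_mulVecLin_conjTranspose_mul_mul_same {m n R : Type*} [Fintype m] [Fintype n]
    [CommRing R] [PartialOrder R] [StarRing R] {M : Matrix m m R} (hM : M.PosDef)
    (J : Matrix m n R) :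
    LinearMap.ker (Jᴴ * M * J).mulVecLin = LinearMap.ker J.mulVecLin := by
  ext x
  simp only [LinearMap.mem_ker, mulVecLin_apply]
  refine ⟨fun h => ?_, fun h => by rw [← mulVec_mulVec, h, mulVec_zero]⟩
  by_contra hJx
  have hpos := hM.dotProduct_mulVec_pos hJx
  rw [star_mulVec, ← dotProduct_mulVec, mulVec_mulVec, mulVec_mulVec, h, dotProduct_zero] at hpos
  exact hpos.false

theorem PosDef.rank_conjTranspose_mul_mul_same {m n R : Type*} [Fintype m] [Fintype n]
    [Field R] [PartialOrder R] [StarRing R] {M : Matrix m m R} (hM : M.PosDef)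
    (J : Matrix m n R) :
    (Jᴴ * M * J).rank = J.rank := by
  have h := (Jᴴ * M * J).mulVecLin.finrank_range_add_finrank_ker
  rw [hM.ker_mulVecLin_conjTranspose_mul_mul_same, ← J.mulVecLin.finrank_range_add_finrank_ker] at h
  exact Nat.add_right_cancel h

open scoped ComplexOrder MatrixOrder in
theorem PosSemidef.trace_mul_nonneg {n 𝕜 : Type*} [Fintype n] [RCLike 𝕜] {A B : Matrix n n 𝕜}
    (hA : A.PosSemidef) (hB : B.PosSemidef) : 0 ≤ (A * B).trace := by
  classical
  set S := CFC.sqrt B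
  have hB_eq : B = Sᴴ * S := by
    rw [(CFC.sqrt_nonneg B).posSemidef.isHermitian.eq, CFC.sqrt_mul_sqrt_self B hB.nonneg]
  rw [hB_eq, ← Matrix.mul_assoc, trace_mul_cycle]
  exact (hA.mul_mul_conjTranspose_same S).trace_nonneg

end Matrix

namespace IsMoorePenroseInv

variable {q : Type*} [Fintype q] {A P Q : Matrix q q ℝ}

theorem unique (hP : IsMoorePenroseInv A P) (hQ : IsMoorePenroseInv A Q) : P = Q := by
  obtain ⟨hP₁, hP₂, hP₃, hP₄⟩ := hP
  obtain ⟨hQ₁, hQ₂, hQ₃, hQ₄⟩ := hQ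
  have hAP : A * P = A * Q :=
    calc A * P = (A * Q) * (A * P) := by rw [← Matrix.mul_assoc, hQ₁]
      _ = (A * Q)ᵀ * (A * P)ᵀ := by rw [hQ₃, hP₃]
      _ = Qᵀ * (A * P * A)ᵀ := by simp only [transpose_mul, Matrix.mul_assoc]
      _ = A * Q := by rw [hP₁, ← transpose_mul, hQ₃]
  have hPA : P * A = Q * A :=
    calc P * A = (P * A) * (Q * A) := by rw [Matrix.mul_assoc, ← Matrix.mul_assoc A, hQ₁]
      _ = (P * A)ᵀ * (Q * A)ᵀ := by rw [hP₄, hQ₄]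
      _ = (A * P * A)ᵀ * Qᵀ := by simp only [transpose_mul, Matrix.mul_assoc]
      _ = Q * A := by rw [hP₁, ← transpose_mul, hQ₄]
  calc P = P * A * P := hP₂.symm
    _ = Q * A * Q := by rw [Matrix.mul_assoc, hAP, ← Matrix.mul_assoc, hPA]
    _ = Q := hQ₂

theorem transpose (hP : IsMoorePenroseInv A P) : IsMoorePenroseInv Aᵀ Pᵀ := by
  obtain ⟨h₁, h₂, h₃, h₄⟩ := hP
  refine ⟨?_, ?_, ?_, ?_⟩
  · simpa only [transpose_mul, Matrix.mul_assoc] using congrArg Matrix.transpose h₁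
  · simpa only [transpose_mul, Matrix.mul_assoc] using congrArg Matrix.transpose h₂
  · rw [← transpose_mul, h₄, h₄]
  · rw [← transpose_mul, h₃, h₃]

theorem transpose_eq_self (hP : IsMoorePenroseInv A P) (hA : Aᵀ = A) : Pᵀ = P :=
  (hA ▸ hP.transpose).unique hP

theorem posSemidef (hP : IsMoorePenroseInv A P) (hA : A.PosSemidef) : P.PosSemidef := by
  have hPt : Pᴴ = P := hP.transpose_eq_self hA.isHermitian
  simpa only [hPt, hP.2.1] using hA.conjTranspose_mul_mul_same P

theorem trace_mul_eq_rank (hP : IsMoorePenroseInv A P) : (P * A).trace = A.rank := by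
  classical
  have hidem : IsIdempotentElem (P * A) := by
    rw [IsIdempotentElem, ← Matrix.mul_assoc, hP.2.1]
  have hrank : (P * A).rank = A.rank := by
    refine le_antisymm (rank_mul_le_right P A) ?_
    calc A.rank = (A * (P * A)).rank := by rw [← Matrix.mul_assoc, hP.1]
      _ ≤ (P * A).rank := rank_mul_le_right A (P * A)
  rw [trace_eq_rank_of_isIdempotentElem hidem, hrank]

end IsMoorePenroseInv

/-- **Trace bound used in the CRB derivation** (inequality (20)):
if `0 ≺ M ⪯ cI` then `tr((Jᵀ M J)† (Jᵀ J)) ≥ (1/c) · rank J`. -/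
theorem trace_pinv_mul_ge (m q : ℕ) (c : ℝ) (hc : 0 < c)
    (J : Matrix (Fin m) (Fin q) ℝ)
    (M : Matrix (Fin m) (Fin m) ℝ) (hM : M.PosDef)
    (hMc : (c • (1 : Matrix (Fin m) (Fin m) ℝ) - M).PosSemidef)
    (P : Matrix (Fin q) (Fin q) ℝ)
    (hP : IsMoorePenroseInv (Jᵀ * M * J) P) :
    (1 / c) * (J.rank : ℝ) ≤ (P * (Jᵀ * J)).trace := by
  have hJ : Jᴴ = Jᵀ := conjTranspose_eq_transpose_of_trivial J
  have hA : (Jᵀ * M * J).PosSemidef := hJ ▸ hM.posSemidef.conjTranspose_mul_mul_same J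
  have hrank : (Jᵀ * M * J).rank = J.rank := hJ ▸ hM.rank_conjTranspose_mul_mul_same J
  have hgap : (c • (Jᵀ * J) - Jᵀ * M * J).PosSemidef := by
    simpa only [hJ, Matrix.mul_sub, Matrix.sub_mul, Matrix.mul_smul, Matrix.smul_mul,
      Matrix.mul_one] using hMc.conjTranspose_mul_mul_same J
  have key := (hP.posSemidef hA).trace_mul_nonneg hgap
  rw [Matrix.mul_sub, trace_sub, Matrix.mul_smul, trace_smul, smul_eq_mul, sub_nonneg,
    hP.trace_mul_eq_rank, hrank] at key
  rwa [one_div, inv_mul_le_iff₀ hc]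
end

section
/- Let ρ > 0, let S be a real symmetric p×p matrix, and let G be a real symmetric p×p matrix. Let T be the unique real symmetric positive definite p×p matrix satisfying ρ T − T⁻¹ = ρ G − S. Then T minimizes the function h(T̃) = −log det T̃ + tr(S T̃) + (ρ/2) ‖T̃ − G‖_F² over all real symmetric positive definite p×p matrices T̃: for every symmetric positive definite T̃, h(T) ≤ h(T̃). -/
open Matrix

/-!
The objective `h` is convex and the defining equation of `T` says exactly that its gradient
`S - T⁻¹ + ρ (T - G)` vanishes at `T`. Writing `T̃ = T + Δ`, the tangent-line inequality for the
concave function `log det` together with `‖X + Δ‖² = ‖X‖² + 2 tr (Xᵀ Δ) + ‖Δ‖²` gives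
`h(T̃) ≥ h(T) + (ρ/2) ‖Δ‖²`. The tangent-line inequality reduces, after conjugating by `A^{-1/2}`,
to `log det D ≤ tr D - p` for positive definite `D`, i.e. to `log λ ≤ λ - 1` on the eigenvalues.
-/

section Frobenius

variable {m n : Type*} [Fintype m] [Fintype n]

lemma frobNorm_sq (A : Matrix m n ℝ) : frobNorm A ^ 2 = ∑ i, ∑ j, A i j ^ 2 :=
  Real.sq_sqrt (by positivity)

lemma trace_transpose_mul_eq_sum (A B : Matrix m n ℝ) :
    (Aᵀ * B).trace = ∑ i, ∑ j, A i j * B i j := by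
  rw [Finset.sum_comm]
  simp only [trace, diag_apply, mul_apply, transpose_apply]

lemma frobNorm_add_sq (A B : Matrix m n ℝ) :
    frobNorm (A + B) ^ 2 = frobNorm A ^ 2 + 2 * (Aᵀ * B).trace + frobNorm B ^ 2 := by
  simp only [frobNorm_sq, trace_transpose_mul_eq_sum, Matrix.add_apply, add_sq,
    Finset.sum_add_distrib, Finset.mul_sum, mul_assoc]

end Frobenius

section LogDet

variable {n : Type*} [Fintype n] [DecidableEq n]

lemma Matrix.PosDef.log_det_le_trace_sub_card {D : Matrix n n ℝ} (hD : D.PosDef) :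
    Real.log D.det ≤ D.trace - Fintype.card n := by
  have hpos := hD.eigenvalues_pos
  rw [hD.1.det_eq_prod_eigenvalues, hD.1.trace_eq_sum_eigenvalues]
  simp only [RCLike.ofReal_real_eq_id, id]
  calc Real.log (∏ i, hD.1.eigenvalues i)
      = ∑ i, Real.log (hD.1.eigenvalues i) := Real.log_prod fun i _ => (hpos i).ne'
    _ ≤ ∑ i, (hD.1.eigenvalues i - 1) :=
      Finset.sum_le_sum fun i _ => Real.log_le_sub_one_of_pos (hpos i)
    _ = ∑ i, hD.1.eigenvalues i - Fintype.card n := by simp [Finset.sum_sub_distrib]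

open scoped MatrixOrder in
lemma Matrix.PosDef.log_det_le_log_det_add_trace {A B : Matrix n n ℝ} (hA : A.PosDef)
    (hB : B.PosDef) : Real.log B.det ≤ Real.log A.det + (A⁻¹ * (B - A)).trace := by
  set R := CFC.sqrt A
  have hRR : R * R = A := CFC.sqrt_mul_sqrt_self A hA.posSemidef.nonneg
  have hR : IsUnit R := (CFC.isUnit_sqrt_iff A hA.posSemidef.nonneg).mpr hA.isUnit
  have hD : (R⁻¹ * B * R⁻¹).PosDef := by
    have := hB.conjTranspose_mul_mul_same
      (mulVec_injective_iff_isUnit.mpr (isUnit_nonsing_inv_iff.mpr hR))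
    rwa [(CFC.sqrt_nonneg A).posSemidef.1.inv] at this
  have hdet : B.det = A.det * (R⁻¹ * B * R⁻¹).det := by
    have hRdet := (isUnit_iff_isUnit_det R).mp hR
    conv_lhs => rw [show B = R * (R⁻¹ * B * R⁻¹) * R by
      simp only [mul_assoc, nonsing_inv_mul _ hRdet, mul_one, mul_nonsing_inv_cancel_left _ _ hRdet]]
    rw [← hRR]
    simp only [det_mul]
    ring
  have htrace : (R⁻¹ * B * R⁻¹).trace = (A⁻¹ * B).trace := by
    rw [trace_mul_cycle, ← mul_inv_rev, hRR]
  have hA1 : A⁻¹ * A = 1 := nonsing_inv_mul A ((isUnit_iff_isUnit_det A).mp hA.isUnit)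
  rw [hdet, Real.log_mul hA.det_pos.ne' hD.det_pos.ne', mul_sub, hA1, trace_sub, trace_one,
    ← htrace]
  linarith [hD.log_det_le_trace_sub_card]

end LogDet

theorem admm_T_update_minimizes_general (p : ℕ) (ρ : ℝ) (hρ : 0 < ρ)
    (S G : Matrix (Fin p) (Fin p) ℝ)
    (T : Matrix (Fin p) (Fin p) ℝ) (hT : T.PosDef)
    (heq : ρ • T - T⁻¹ = ρ • G - S) :
    ∀ Tt : Matrix (Fin p) (Fin p) ℝ, Tt.PosDef →
      -Real.log T.det + (S * T).trace + ρ / 2 * frobNorm (T - G) ^ 2 ≤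
      -Real.log Tt.det + (S * Tt).trace + ρ / 2 * frobNorm (Tt - G) ^ 2 := by
  intro Tt hTt
  have hlog := hT.log_det_le_log_det_add_trace hTt
  set Δ := Tt - T
  have hgrad : S = T⁻¹ - ρ • (T - G) := by
    rw [smul_sub]
    linear_combination (norm := module) heq
  have hΔ : Δᵀ = Δ := (isHermitian_iff_isSymm.mp (hTt.1.sub hT.1)).eq
  have hsymm : ((T - G)ᵀ * Δ).trace = ((T - G) * Δ).trace := by
    rw [← trace_transpose, transpose_mul, transpose_transpose, hΔ, trace_mul_comm]
  have hsplit : Tt - G = (T - G) + Δ := by rw [add_comm, sub_add_sub_cancel]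
  have hlin : (S * Tt).trace = (S * T).trace + (S * Δ).trace := by
    rw [← trace_add, ← mul_add, add_sub_cancel]
  have hstat : (S * Δ).trace = (T⁻¹ * Δ).trace - ρ * ((T - G) * Δ).trace := by
    rw [hgrad, sub_mul, trace_sub, smul_mul, trace_smul, smul_eq_mul]
  rw [hsplit, frobNorm_add_sq, hsymm, hlin, hstat]
  have hquad := mul_nonneg hρ.le (sq_nonneg (frobNorm Δ))
  linarith

/-- **Optimality of the ADMM `T`-update**: the unique symmetric positive definite
solution `T` of `ρT − T⁻¹ = ρG − S` minimizes
`h(T̃) = −log det T̃ + tr(S T̃) + (ρ/2)‖T̃ − G‖_F²` over symmetric positive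
definite matrices. -/
theorem admm_T_update_minimizes (p : ℕ) (ρ : ℝ) (hρ : 0 < ρ)
    (S G : Matrix (Fin p) (Fin p) ℝ)
    (hS : S.IsHermitian) (hG : G.IsHermitian)
    (T : Matrix (Fin p) (Fin p) ℝ) (hT : T.PosDef)
    (heq : ρ • T - T⁻¹ = ρ • G - S) :
    ∀ Tt : Matrix (Fin p) (Fin p) ℝ, Tt.PosDef →
      -Real.log T.det + (S * T).trace + ρ / 2 * frobNorm (T - G) ^ 2 ≤
      -Real.log Tt.det + (S * Tt).trace + ρ / 2 * frobNorm (Tt - G) ^ 2 :=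
  admm_T_update_minimizes_general p ρ hρ S G T hT heq
end
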